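/- arXiv:2401.08060 — 2 statements merged into one kernel-verified Lean document; each statement's English description precedes it below -/
import Mathlib

section
/- Under the hypotheses of the three sequences lemma (α_{k+1} - α_k ≤ β_k α_k + γ_k eventually, {β_k} bounded, ∑ β_k = ∞, ∑ γ_k < ∞, ∑ β_k α_k² < ∞, all sequences nonnegative), one has liminf_{k→∞} α_k = 0. -/
open Filter Topology

theorem Filter.liminf_eq_of_frequently_lt_add {ι : Type*} {l : Filter ι} {u : ι → ℝ} {a : ℝ}
    (hle : ∀ᶠ i in l, a ≤ u i) (hlt : ∀ ε > 0, ∃ᶠ i in l, u i < a + ε) :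
    liminf u l = a := by
  have hcobdd : IsCoboundedUnder (· ≥ ·) l u :=
    .of_frequently_le ((hlt 1 one_pos).mono fun _ h => h.le)
  have hbdd : IsBoundedUnder (· ≥ ·) l u := ⟨a, hle⟩
  refine le_antisymm (le_of_forall_pos_le_add fun ε hε => ?_) (le_liminf_of_le hcobdd hle)
  exact liminf_le_of_frequently_le ((hlt ε hε).mono fun _ h => h.le) hbdd

/-- Otherwise eventually `δ ^ 2 * β k ≤ β k * α k ^ 2`, and `∑ β k` would converge. -/
theorem frequently_lt_of_summable_mul_sq {α β : ℕ → ℝ} (hβ : ∀ k, 0 ≤ β k)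
    (hβdiv : ¬Summable β) (hβαsum : Summable fun k => β k * α k ^ 2) {δ : ℝ} (hδ : 0 < δ) :
    ∃ᶠ k in atTop, α k < δ := by
  by_contra! hge
  refine hβdiv <| .of_norm_bounded_eventually_nat (hβαsum.mul_left (δ ^ 2)⁻¹) ?_
  filter_upwards [hge] with k hk
  rw [Real.norm_of_nonneg (hβ k), le_inv_mul_iff₀ (by positivity)]
  have hsq : δ ^ 2 ≤ α k ^ 2 := pow_le_pow_left₀ hδ.le hk 2
  nlinarith [hβ k]

theorem stmt_3_general (α β : ℕ → ℝ)
    (hα : ∀ k, 0 ≤ α k) (hβ : ∀ k, 0 ≤ β k)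
    (hβdiv : Tendsto (fun n => ∑ k ∈ Finset.range n, β k) atTop atTop)
    (hβαsum : Summable (fun k => β k * (α k) ^ 2)) :
    liminf α atTop = 0 := by
  have hβ_not_summable : ¬Summable β := (not_summable_iff_tendsto_nat_atTop_of_nonneg hβ).mpr hβdiv
  refine liminf_eq_of_frequently_lt_add (.of_forall hα) fun ε hε => ?_
  simpa using frequently_lt_of_summable_mul_sq hβ hβ_not_summable hβαsum hε

/-- Under the hypotheses of the three sequences lemma, `liminf α_k = 0`. -/
theorem stmt_3 (α β γ : ℕ → ℝ)
    (hα : ∀ k, 0 ≤ α k) (hβ : ∀ k, 0 ≤ β k) (hγ : ∀ k, 0 ≤ γ k)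
    (hrec : ∀ᶠ k in atTop, α (k + 1) - α k ≤ β k * α k + γ k)
    (hβbdd : ∃ M, ∀ k, β k ≤ M)
    (hβdiv : Tendsto (fun n => ∑ k ∈ Finset.range n, β k) atTop atTop)
    (hγsum : Summable γ)
    (hβαsum : Summable (fun k => β k * (α k) ^ 2)) :
    liminf α atTop = 0 :=
  stmt_3_general α β hα hβ hβdiv hβαsum
end

section
/- Let f : ℝⁿ → ℝ be differentiable satisfying the L-descent condition, ν ∈ [0,1), δ > 0, and let x, g ∈ ℝⁿ, t > 0 with ‖g - ∇f(x)‖ ≤ ν‖∇f(x)‖ and t ≤ (2 - 2ν - δ)/(L(1+ν)²). Then for x⁺ = x - t g one has f(x⁺) ≤ f(x) - (δ t/2)‖∇f(x)‖². -/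
/-!
The relative error bound makes `g` a uniformly good descent direction:
`⟪∇f x, g⟫ ≥ (1 - ν) ‖∇f x‖²` and `‖g‖ ≤ (1 + ν) ‖∇f x‖`. Inserting `y = x - t g` into the
descent inequality, the linear term gains `t (1 - ν) ‖∇f x‖²` while the quadratic term costs at
most `(L t² / 2) (1 + ν)² ‖∇f x‖²`, and the step-size bound leaves a net gain of `δ t/2 ‖∇f x‖²`.
-/

open RealInnerProductSpace

theorem norm_le_one_add_mul_norm_of_norm_sub_le {E : Type*} [SeminormedAddCommGroup E]
    {G g : E} {ν : ℝ} (hg : ‖g - G‖ ≤ ν * ‖G‖) :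
    ‖g‖ ≤ (1 + ν) * ‖G‖ :=
  calc ‖g‖ = ‖G + (g - G)‖ := by rw [add_sub_cancel]
    _ ≤ ‖G‖ + ‖g - G‖ := norm_add_le _ _
    _ ≤ (1 + ν) * ‖G‖ := by linarith

section InexactDirection

variable {E : Type*} [NormedAddCommGroup E] [InnerProductSpace ℝ E] {G g : E} {ν : ℝ}

theorem one_sub_mul_norm_sq_le_inner_of_norm_sub_le (hg : ‖g - G‖ ≤ ν * ‖G‖) :
    (1 - ν) * ‖G‖ ^ 2 ≤ ⟪G, g⟫ := by
  have hsplit : ⟪G, g⟫ = ‖G‖ ^ 2 + ⟪G, g - G⟫ := by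
    rw [inner_sub_right, real_inner_self_eq_norm_sq]; ring
  have hcs : -(‖G‖ * ‖g - G‖) ≤ ⟪G, g - G⟫ := (abs_le.mp (abs_real_inner_le_norm G (g - G))).1
  nlinarith [mul_le_mul_of_nonneg_left hg (norm_nonneg G)]

theorem inner_neg_smul_add_norm_sq_le {L δ t : ℝ} (hL : 0 ≤ L) (ht : 0 ≤ t)
    (hg : ‖g - G‖ ≤ ν * ‖G‖) (hstep : t * (L * (1 + ν) ^ 2) ≤ 2 - 2 * ν - δ) :
    ⟪G, -(t • g)⟫ + L / 2 * ‖-(t • g)‖ ^ 2 ≤ -(δ * t / 2 * ‖G‖ ^ 2) := by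
  rw [inner_neg_right, real_inner_smul_right, norm_neg, norm_smul, Real.norm_eq_abs,
    abs_of_nonneg ht]
  have hinner := one_sub_mul_norm_sq_le_inner_of_norm_sub_le hg
  have hnorm_sq : ‖g‖ ^ 2 ≤ (1 + ν) ^ 2 * ‖G‖ ^ 2 := by
    rw [← mul_pow]
    exact pow_le_pow_left₀ (norm_nonneg g) (norm_le_one_add_mul_norm_of_norm_sub_le hg) 2
  nlinarith [mul_le_mul_of_nonneg_left hinner ht,
    mul_le_mul_of_nonneg_left hnorm_sq (by positivity : 0 ≤ L * t * t),
    mul_le_mul_of_nonneg_right hstep (by positivity : 0 ≤ t * ‖G‖ ^ 2)]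

end InexactDirection

theorem stmt_9_general (n : ℕ) (f : EuclideanSpace ℝ (Fin n) → ℝ) (L : ℝ) (hL : 0 < L)
    (hdesc : ∀ x y, f y ≤ f x + ⟪gradient f x, y - x⟫ + L / 2 * ‖y - x‖ ^ 2)
    (ν δ : ℝ) (hν0 : 0 ≤ ν)
    (x g : EuclideanSpace ℝ (Fin n)) (t : ℝ) (ht : 0 < t)
    (hg : ‖g - gradient f x‖ ≤ ν * ‖gradient f x‖)
    (htle : t ≤ (2 - 2 * ν - δ) / (L * (1 + ν) ^ 2)) :
    f (x - t • g) ≤ f x - δ * t / 2 * ‖gradient f x‖ ^ 2 := by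
  have hstep : t * (L * (1 + ν) ^ 2) ≤ 2 - 2 * ν - δ := (le_div_iff₀ (by positivity)).1 htle
  have hdecrease := hdesc x (x - t • g)
  rw [sub_sub_cancel_left] at hdecrease
  linarith [inner_neg_smul_add_norm_sq_le hL.le ht.le hg hstep]

/-- One-step sufficient decrease for inexact gradient descent with
relative error `ν`. -/
theorem stmt_9 (n : ℕ) (f : EuclideanSpace ℝ (Fin n) → ℝ) (L : ℝ) (hL : 0 < L)
    (hdiff : Differentiable ℝ f)
    (hdesc : ∀ x y, f y ≤ f x + ⟪gradient f x, y - x⟫ + L / 2 * ‖y - x‖ ^ 2)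
    (ν δ : ℝ) (hν0 : 0 ≤ ν) (hν1 : ν < 1) (hδ : 0 < δ)
    (x g : EuclideanSpace ℝ (Fin n)) (t : ℝ) (ht : 0 < t)
    (hg : ‖g - gradient f x‖ ≤ ν * ‖gradient f x‖)
    (htle : t ≤ (2 - 2 * ν - δ) / (L * (1 + ν) ^ 2)) :
    f (x - t • g) ≤ f x - δ * t / 2 * ‖gradient f x‖ ^ 2 :=
  stmt_9_general n f L hL hdesc ν δ hν0 x g t ht hg htle
end
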